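/- arXiv:0707.2085 — 2 statements merged into one kernel-verified Lean document; each statement's English description precedes it below -/
import Mathlib

section
/- Let W be a Coxeter group and let t₁·t₂·…·t_l be a factorisation of the identity element of W into quasireflections. Then l is even, and the factorisation is Hurwitz equivalent to a factorisation t′₁·t′₂·…·t′_l in which t′_{2i−1} = t′_{2i} for every i. -/
/-!
Among the partial products `w = t₁ ⋯ t_k`, choose one of maximal length. Then `t_k` and
`t_{k+1}` are both right inversions of `w`; if they differ, the strong exchange property shows
that `w t_k t_{k+1}` or `w t_{k+1} t_k` is shorter than `w`, and the corresponding Hurwitz move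
lowers the sum of the lengths of all partial products. Iterating, two equal factors become
adjacent; Hurwitz moves carry this pair to the front, and the argument recurses on the remaining
factorisation of `1`.

The strong exchange property comes from the action of `W` on `W × {±1}` in which `s` sends
`(x, ε)` to `(s x s, ±ε)`, with the sign flipped exactly when `x = s`: it shows that the parity
of the number of occurrences of `t` in the right inversion sequence of a word depends only on
the element of `W` the word represents.
-/

/-- A Hurwitz move on a tuple of group elements: an adjacent pair `(f, g)` is replaced
either by `(g, g⁻¹ f g)` or by `(f g f⁻¹, f)`; the remaining factors are unchanged. -/
def HurwitzMove {G : Type*} [Group G] (l l' : List G) : Prop :=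
  ∃ (a : List G) (f g : G) (b : List G),
    l = a ++ [f, g] ++ b ∧
      (l' = a ++ [g, g⁻¹ * f * g] ++ b ∨ l' = a ++ [f * g * f⁻¹, f] ++ b)

/-- Hurwitz equivalence: the equivalence relation generated by Hurwitz moves. -/
def HurwitzEquiv {G : Type*} [Group G] : List G → List G → Prop :=
  Relation.EqvGen HurwitzMove

open List

section Hurwitz

variable {G : Type*} [Group G] {l l' : List G}

theorem HurwitzMove.symm (h : HurwitzMove l l') : HurwitzMove l' l := by
  obtain ⟨a, f, g, b, rfl, rfl | rfl⟩ := h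
  · exact ⟨a, g, g⁻¹ * f * g, b, rfl, Or.inr (by group)⟩
  · exact ⟨a, f * g * f⁻¹, f, b, rfl, Or.inl (by group)⟩

instance : Std.Symm (HurwitzMove (G := G)) := ⟨fun _ _ => HurwitzMove.symm⟩

theorem hurwitzEquiv_iff_reflTransGen :
    HurwitzEquiv l l' ↔ Relation.ReflTransGen HurwitzMove l l' := by
  rw [HurwitzEquiv, Relation.EqvGen.eqvGen_eq_reflTransGen]

theorem HurwitzMove.append_left (c : List G) (h : HurwitzMove l l') :
    HurwitzMove (c ++ l) (c ++ l') := by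
  obtain ⟨a, f, g, b, rfl, rfl | rfl⟩ := h
  · exact ⟨c ++ a, f, g, b, by simp, Or.inl (by simp)⟩
  · exact ⟨c ++ a, f, g, b, by simp, Or.inr (by simp)⟩

theorem HurwitzMove.prod_eq (h : HurwitzMove l l') : l.prod = l'.prod := by
  obtain ⟨a, f, g, b, rfl, rfl | rfl⟩ := h <;> simp [mul_assoc]

theorem HurwitzMove.length_eq (h : HurwitzMove l l') : l.length = l'.length := by
  obtain ⟨a, f, g, b, rfl, rfl | rfl⟩ := h <;> simp

theorem HurwitzMove.forall_mem {P : G → Prop} (hP : ∀ x u, P u → P (x * u * x⁻¹))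
    (h : HurwitzMove l l') (hl : ∀ u ∈ l, P u) : ∀ u ∈ l', P u := by
  obtain ⟨a, f, g, b, rfl, rfl | rfl⟩ := h <;>
    simp only [forall_mem_append, forall_mem_cons] at hl ⊢ <;>
    obtain ⟨⟨ha, hf, hg, hnil⟩, hb⟩ := hl
  · exact ⟨⟨ha, hg, by simpa using hP g⁻¹ f hf, hnil⟩, hb⟩
  · exact ⟨⟨ha, hP f g hg, hf, hnil⟩, hb⟩

namespace HurwitzEquiv

theorem refl (l : List G) : HurwitzEquiv l l := Relation.EqvGen.refl l

theorem trans {l'' : List G} (h : HurwitzEquiv l l') (h' : HurwitzEquiv l' l'') :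
    HurwitzEquiv l l'' :=
  Relation.EqvGen.trans _ _ _ h h'

theorem of_hurwitzMove (h : HurwitzMove l l') : HurwitzEquiv l l' := Relation.EqvGen.rel _ _ h

theorem append_left (c : List G) (h : HurwitzEquiv l l') : HurwitzEquiv (c ++ l) (c ++ l') :=
  hurwitzEquiv_iff_reflTransGen.2 <| Relation.ReflTransGen.lift (c ++ ·)
    (fun _ _ hm => hm.append_left c) _ _ (hurwitzEquiv_iff_reflTransGen.1 h)

theorem prod_eq (h : HurwitzEquiv l l') : l.prod = l'.prod := by
  rw [hurwitzEquiv_iff_reflTransGen] at h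
  induction h with
  | refl => rfl
  | tail _ hm ih => exact ih.trans hm.prod_eq

theorem length_eq (h : HurwitzEquiv l l') : l.length = l'.length := by
  rw [hurwitzEquiv_iff_reflTransGen] at h
  induction h with
  | refl => rfl
  | tail _ hm ih => exact ih.trans hm.length_eq

theorem forall_mem {P : G → Prop} (hP : ∀ x u, P u → P (x * u * x⁻¹))
    (h : HurwitzEquiv l l') (hl : ∀ u ∈ l, P u) : ∀ u ∈ l', P u := by
  rw [hurwitzEquiv_iff_reflTransGen] at h
  induction h with
  | refl => exact hl
  | tail _ hm ih => exact hm.forall_mem hP ih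

end HurwitzEquiv

theorem hurwitzEquiv_append_cons_cons (c : List G) (t : G) (d : List G) :
    HurwitzEquiv (c ++ t :: t :: d)
      (c.prod * t * c.prod⁻¹ :: c.prod * t * c.prod⁻¹ :: (c ++ d)) := by
  induction c with
  | nil => simpa using HurwitzEquiv.refl _
  | cons x c ih =>
    set u := c.prod * t * c.prod⁻¹
    have hu : (x :: c).prod * t * (x :: c).prod⁻¹ = x * u * x⁻¹ := by
      simp only [u, prod_cons, mul_inv_rev]
      group
    have h₁ : HurwitzMove (x :: u :: u :: (c ++ d)) (x * u * x⁻¹ :: x :: u :: (c ++ d)) :=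
      ⟨[], x, u, u :: (c ++ d), rfl, Or.inr rfl⟩
    have h₂ : HurwitzMove (x * u * x⁻¹ :: x :: u :: (c ++ d))
        (x * u * x⁻¹ :: x * u * x⁻¹ :: x :: (c ++ d)) :=
      ⟨[x * u * x⁻¹], x, u, c ++ d, rfl, Or.inr rfl⟩
    rw [hu]
    exact ((ih.append_left [x]).trans (.of_hurwitzMove h₁)).trans (.of_hurwitzMove h₂)

end Hurwitz

namespace CoxeterSystem

variable {B W : Type*} [Group W] {M : CoxeterMatrix B} (cs : CoxeterSystem M W)

local prefix:100 "s" => cs.simple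
local prefix:100 "π" => cs.wordProd
local prefix:100 "ℓ" => cs.length
local prefix:100 "ris " => cs.rightInvSeq
local prefix:100 "lis " => cs.leftInvSeq

theorem prod_map_alternatingWord {G : Type*} [Monoid G] (g : B → G) (i i' : B) (m : ℕ) :
    ((alternatingWord i i' (2 * m)).map g).prod = (g i * g i') ^ m := by
  induction m with
  | zero => simp [alternatingWord]
  | succ m ih =>
    rw [show 2 * (m + 1) = 2 * m + 1 + 1 by ring, alternatingWord_succ', alternatingWord_succ',
      if_neg (by simp [parity_simps]), if_pos (by simp [parity_simps]), map_cons, map_cons,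
      prod_cons, prod_cons, ih, pow_succ', mul_assoc]

theorem leftInvSeq_alternatingWord (i i' : B) (p : ℕ) :
    lis (alternatingWord i i' (2 * p)) = (range (2 * p)).map fun k => s i * (s i' * s i) ^ k := by
  refine ext_getElem (by simp) fun k hk _ => ?_
  rw [getElem_leftInvSeq_alternatingWord cs i i' p k (by simpa using hk),
    prod_alternatingWord_eq_mul_pow, if_neg (by simp [parity_simps]),
    show (2 * k + 1) / 2 = k by omega, getElem_map, getElem_range]

theorem even_count_leftInvSeq_alternatingWord [DecidableEq W] (i i' : B) (x : W) :
    Even ((lis (alternatingWord i i' (2 * M i i'))).count x) := by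
  have hperiod : (range (M i i')).map (fun k => s i * (s i' * s i) ^ (M i i' + k)) =
      (range (M i i')).map fun k => s i * (s i' * s i) ^ k := by
    simp [pow_add]
  rw [leftInvSeq_alternatingWord, two_mul, range_add, map_append, map_map]
  simp only [Function.comp_def, hperiod, count_append]
  exact ⟨_, rfl⟩

section SignRepresentation

theorem simple_mul_mul_simple_eq_simple_iff (i : B) (x : W) : s i * x * s i = s i ↔ x = s i := by
  rw [mul_assoc, mul_eq_left, mul_eq_one_iff_eq_inv, inv_simple]

variable [DecidableEq W]

def signPerm (i : B) : Equiv.Perm (W × ℤˣ) :=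
  Function.Involutive.toPerm (fun p => (s i * p.1 * s i, if p.1 = s i then -p.2 else p.2)) <| by
    rintro ⟨x, ε⟩
    simp only [simple_mul_mul_simple_eq_simple_iff]
    split_ifs <;> simp [mul_assoc]

theorem signPerm_apply (i : B) (x : W) (ε : ℤˣ) :
    cs.signPerm i (x, ε) = (s i * x * s i, if x = s i then -ε else ε) := rfl

theorem inv_signPerm (i : B) : (cs.signPerm i)⁻¹ = cs.signPerm i :=
  Function.Involutive.toPerm_symm _

theorem prod_map_signPerm_apply (ω : List B) (x : W) (ε : ℤˣ) :
    (ω.map cs.signPerm).prod (x, ε) =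
      (π ω * x * (π ω)⁻¹, (-1) ^ (ris ω).count x * ε) := by
  induction ω generalizing ε with
  | nil => simp
  | cons i ω ih =>
    have hcond : π ω * x * (π ω)⁻¹ = s i ↔ (π ω)⁻¹ * s i * π ω = x := by
      constructor <;> intro h <;> rw [← h] <;> group
    rw [map_cons, prod_cons, Equiv.Perm.mul_apply, ih, signPerm_apply, rightInvSeq, count_cons,
      wordProd_cons, mul_inv_rev, inv_simple]
    refine Prod.ext (by group) ?_
    by_cases h : (π ω)⁻¹ * s i * π ω = x
    · simp [hcond.2 h, h, pow_succ]
    · simp [mt hcond.1 h, h]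

theorem isLiftable_signPerm : M.IsLiftable cs.signPerm := by
  intro i i'
  set ω := alternatingWord i i' (2 * M i i')
  have hπ : π ω = 1 := by
    rw [prod_alternatingWord_eq_mul_pow, if_pos (even_two_mul _), one_mul,
      Nat.mul_div_cancel_left _ two_pos, simple_mul_simple_pow]
  -- Reversing `ω` inverts the product and turns the right inversion sequence into the left one.
  have hrev : (ω.reverse.map cs.signPerm).prod = 1 := by
    refine Equiv.ext fun ⟨x, ε⟩ => ?_
    rw [prod_map_signPerm_apply, wordProd_reverse, hπ, rightInvSeq_reverse, count_reverse,
      (cs.even_count_leftInvSeq_alternatingWord i i' x).neg_one_pow]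
    simp
  rw [← prod_map_alternatingWord, ← inv_eq_one, prod_inv_reverse, map_map]
  simpa [Function.comp_def, inv_signPerm, map_reverse] using hrev

def signRep : W →* Equiv.Perm (W × ℤˣ) := cs.lift ⟨cs.signPerm, cs.isLiftable_signPerm⟩

theorem signRep_simple (i : B) : cs.signRep (s i) = cs.signPerm i :=
  cs.lift_apply_simple cs.isLiftable_signPerm i

theorem signRep_wordProd_apply (ω : List B) (x : W) (ε : ℤˣ) :
    cs.signRep (π ω) (x, ε) = (π ω * x * (π ω)⁻¹, (-1) ^ (ris ω).count x * ε) := by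
  rw [wordProd, map_list_prod, map_map, Function.comp_def]
  simp only [signRep_simple]
  exact cs.prod_map_signPerm_apply ω x ε

theorem signRep_apply (w x : W) (ε : ℤˣ) :
    cs.signRep w (x, ε) = (w * x * w⁻¹, (cs.signRep w (x, 1)).2 * ε) := by
  obtain ⟨ω, rfl⟩ := cs.wordProd_surjective w
  simp [signRep_wordProd_apply]

theorem signRep_apply_self_of_isReflection {t : W} (ht : cs.IsReflection t) (ε : ℤˣ) :
    cs.signRep t (t, ε) = (t, -ε) := by
  obtain ⟨u, i, rfl⟩ := ht
  set δ := (cs.signRep u⁻¹ (u * s i * u⁻¹, 1)).2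
  have hinv : ∀ ε', cs.signRep u⁻¹ (u * s i * u⁻¹, ε') = (s i, δ * ε') := fun ε' => by
    rw [signRep_apply]
    congr 1
    group
  have hback : cs.signRep u (s i, δ * ε) = (u * s i * u⁻¹, ε) := by
    rw [← hinv, ← Equiv.Perm.mul_apply, ← map_mul, mul_inv_cancel, map_one,
      Equiv.Perm.one_apply]
  calc cs.signRep (u * s i * u⁻¹) (u * s i * u⁻¹, ε)
      = cs.signRep u (cs.signPerm i (cs.signRep u⁻¹ (u * s i * u⁻¹, ε))) := by
        simp [map_mul, signRep_simple]
    _ = cs.signRep u (s i, -(δ * ε)) := by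
        rw [hinv, signPerm_apply, if_pos rfl, simple_mul_simple_self, one_mul]
    _ = (u * s i * u⁻¹, -ε) := by
        rw [signRep_apply] at hback ⊢
        simp only [Prod.mk.injEq, mul_neg] at hback ⊢
        exact ⟨hback.1, by rw [hback.2]⟩

end SignRepresentation

theorem mem_rightInvSeq_of_isRightInversion (ω : List B) {t : W}
    (ht : cs.IsRightInversion (π ω) t) : t ∈ ris ω := by
  classical
  obtain ⟨σ, hσ, hσt⟩ := cs.exists_isReduced (π ω * t)
  have hω : π ω = π σ * t := by rw [← hσt, mul_assoc, ht.1.mul_self, mul_one]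
  have hσ_not : t ∉ ris σ := fun h => by
    have := (cs.isRightInversion_of_mem_rightInvSeq hσ h).2
    rw [← hω, ← hσt] at this
    exact absurd ht.2 (by omega)
  -- `t` flips the sign of `(t, ε)`, and `signRep (π σ)` does not, since `t ∉ ris σ`.
  have hsign : ((-1 : ℤˣ) ^ (ris ω).count t) = -1 := by
    have := congr_arg Prod.snd (cs.signRep_wordProd_apply ω t 1)
    rw [hω, map_mul, Equiv.Perm.mul_apply, signRep_apply_self_of_isReflection _ ht.1, ← hω,
      signRep_wordProd_apply, count_eq_zero.2 hσ_not] at this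
    simpa using this.symm
  refine count_pos_iff.1 (Nat.pos_of_ne_zero fun h => ?_)
  rw [h, pow_zero] at hsign
  exact absurd hsign (by decide)

theorem rightInvSeq_append (ω ω' : List B) :
    ris (ω ++ ω') = (ris ω).map (MulAut.conj (π ω')⁻¹) ++ ris ω' := by
  induction ω with
  | nil => simp
  | cons i ω ih =>
    rw [cons_append, rightInvSeq, rightInvSeq, ih, map_cons, cons_append, wordProd_append]
    simp only [MulAut.conj_apply, inv_inv, mul_inv_rev]
    group

theorem exists_eq_append_cons_of_mem_rightInvSeq {ω : List B} {t : W} (ht : t ∈ ris ω) :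
    ∃ α i β, ω = α ++ i :: β ∧ t = (π β)⁻¹ * s i * π β := by
  induction ω with
  | nil => simp at ht
  | cons j ω ih =>
    rcases mem_cons.1 ht with rfl | ht
    · exact ⟨[], j, ω, rfl, rfl⟩
    · obtain ⟨α, i, β, rfl, rfl⟩ := ih ht
      exact ⟨j :: α, i, β, rfl, rfl⟩

theorem IsReduced.length_wordProd_lt {cs : CoxeterSystem M W} {ω ω' : List B}
    (hω : cs.IsReduced ω) (h : ω'.length < ω.length) :
    cs.length (cs.wordProd ω') < cs.length (cs.wordProd ω) :=
  (cs.length_wordProd_le ω').trans_lt (hω.eq ▸ h)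

theorem length_mul_mul_lt_or_length_mul_mul_lt {x p q : W} (hp : cs.IsRightInversion x p)
    (hq : cs.IsRightInversion x q) (hpq : p ≠ q) :
    ℓ (x * p * q) < ℓ x ∨ ℓ (x * q * p) < ℓ x := by
  obtain ⟨ω, hω, rfl⟩ := cs.exists_isReduced x
  obtain ⟨α, i, β, rfl, rfl⟩ :=
    exists_eq_append_cons_of_mem_rightInvSeq cs (cs.mem_rightInvSeq_of_isRightInversion _ hp)
  have hq' := cs.mem_rightInvSeq_of_isRightInversion _ hq
  rw [rightInvSeq_append, rightInvSeq, mem_append, mem_cons] at hq'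
  rcases hq' with hq' | rfl | hq'
  · right
    obtain ⟨r, hr, rfl⟩ := mem_map.1 hq'
    obtain ⟨γ, k, δ, rfl, rfl⟩ := exists_eq_append_cons_of_mem_rightInvSeq cs hr
    calc ℓ (π (γ ++ k :: δ ++ i :: β) * _ * _) = ℓ (π (γ ++ δ ++ β)) := by
          simp only [wordProd_append, wordProd_cons, MulAut.conj_apply]
          group
          simp only [simple_mul_simple_cancel_right]
      _ < _ := hω.length_wordProd_lt (by simp)
  · exact absurd rfl hpq
  · left
    obtain ⟨γ, k, δ, rfl, rfl⟩ := exists_eq_append_cons_of_mem_rightInvSeq cs hq'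
    calc ℓ (π (α ++ i :: (γ ++ k :: δ)) * _ * _) = ℓ (π (α ++ γ ++ δ)) := by
          simp only [wordProd_append, wordProd_cons]
          group
          simp only [simple_mul_simple_cancel_right]
      _ < _ := hω.length_wordProd_lt (by simp)

noncomputable def prefixLengthSum (x : W) : List W → ℕ
  | [] => ℓ x
  | t :: l => ℓ x + prefixLengthSum (x * t) l

theorem prefixLengthSum_append_cons_cons_lt {f g f' g' : W} (hfg : f' * g' = f * g)
    (A D : List W) (x : W) (hlt : ℓ (x * A.prod * f') < ℓ (x * A.prod * f)) :
    cs.prefixLengthSum x (A ++ f' :: g' :: D) < cs.prefixLengthSum x (A ++ f :: g :: D) := by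
  induction A generalizing x with
  | nil =>
    simp only [prod_nil, mul_one] at hlt
    simp only [nil_append, prefixLengthSum, mul_assoc, hfg]
    omega
  | cons a A ih =>
    simp only [prod_cons, ← mul_assoc] at hlt
    simpa [prefixLengthSum] using ih (x * a) hlt

theorem exists_peak {l : List W} (hne : l ≠ []) (hrefl : ∀ t ∈ l, cs.IsReflection t)
    (hprod : l.prod = 1) :
    ∃ A p q D, l = A ++ p :: q :: D ∧
      cs.IsRightInversion (A.prod * p) p ∧ cs.IsRightInversion (A.prod * p) q := by
  classical
  obtain ⟨P, hP, hmax⟩ :=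
    l.inits.toFinset.exists_max_image (fun P => ℓ P.prod) ⟨[], by simp⟩
  simp only [mem_toFinset, mem_inits] at hP hmax
  have hpos : 0 < ℓ P.prod := by
    obtain ⟨a, l', hl⟩ := exists_cons_of_ne_nil hne
    have ha : 0 < ℓ a := (hrefl a (by simp [hl])).odd_length.pos
    have := hmax [a] (by simp [hl])
    simp only [prod_cons, prod_nil, mul_one] at this
    omega
  obtain ⟨R, rfl⟩ := hP
  obtain ⟨q, D, rfl⟩ := exists_cons_of_ne_nil (show R ≠ [] by
    rintro rfl
    rw [append_nil] at hprod
    simp [hprod] at hpos)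
  obtain ⟨A, p, rfl⟩ := (eq_nil_or_concat' P).resolve_left (by rintro rfl; simp at hpos)
  have hp := hrefl p (by simp)
  have hq := hrefl q (by simp)
  refine ⟨A, p, q, D, by simp, ⟨hp, ?_⟩, ⟨hq, ?_⟩⟩
  · have := hmax A (by simp)
    rw [mul_assoc, hp.mul_self, mul_one]
    exact lt_of_le_of_ne (by simpa using this) (hp.length_mul_left_ne A.prod).symm
  · have := hmax (A ++ [p, q]) (by simp)
    exact lt_of_le_of_ne (by simpa [mul_assoc] using this) (hq.length_mul_left_ne _)

theorem exists_cons_cons_or_exists_hurwitzMove {l : List W} (hne : l ≠ [])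
    (hrefl : ∀ t ∈ l, cs.IsReflection t) (hprod : l.prod = 1) :
    (∃ A t D, l = A ++ t :: t :: D) ∨
      ∃ l', HurwitzMove l l' ∧ cs.prefixLengthSum 1 l' < cs.prefixLengthSum 1 l := by
  obtain ⟨A, p, q, D, rfl, hp, hq⟩ := cs.exists_peak hne hrefl hprod
  by_cases hpq : p = q
  · exact .inl ⟨A, p, D, by rw [hpq]⟩
  right
  rcases cs.length_mul_mul_lt_or_length_mul_mul_lt hp hq hpq with hlt | hlt
  · refine ⟨A ++ q :: q⁻¹ * p * q :: D, ⟨A, p, q, D, by simp, .inl (by simp)⟩, ?_⟩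
    refine cs.prefixLengthSum_append_cons_cons_lt (by group) A D 1 ?_
    rw [one_mul]
    rwa [mul_assoc A.prod p p, hp.1.mul_self, mul_one] at hlt
  · refine ⟨A ++ p * q * p⁻¹ :: p :: D, ⟨A, p, q, D, by simp, .inr (by simp)⟩, ?_⟩
    refine cs.prefixLengthSum_append_cons_cons_lt (by group) A D 1 ?_
    rwa [one_mul, hp.1.inv, ← mul_assoc, ← mul_assoc]

theorem exists_hurwitzEquiv_append_cons_cons {l : List W} (hne : l ≠ [])
    (hrefl : ∀ t ∈ l, cs.IsReflection t) (hprod : l.prod = 1) :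
    ∃ A t D, HurwitzEquiv l (A ++ t :: t :: D) := by
  induction hn : cs.prefixLengthSum 1 l using Nat.strong_induction_on generalizing l with
  | _ n ih =>
  rcases cs.exists_cons_cons_or_exists_hurwitzMove hne hrefl hprod with
    ⟨A, t, D, rfl⟩ | ⟨l', hl', hlt⟩
  · exact ⟨A, t, D, .refl _⟩
  have hne' : l' ≠ [] := by
    rintro rfl
    exact hne (List.length_eq_zero_iff.1 hl'.length_eq)
  obtain ⟨A, t, D, h⟩ := ih _ (hn ▸ hlt) hne' (hl'.forall_mem (fun x u hu => hu.conj x) hrefl)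
    (hl'.prod_eq ▸ hprod) rfl
  exact ⟨A, t, D, (HurwitzEquiv.of_hurwitzMove hl').trans h⟩

theorem exists_hurwitzEquiv_cons_cons {l : List W} (hne : l ≠ [])
    (hrefl : ∀ t ∈ l, cs.IsReflection t) (hprod : l.prod = 1) :
    ∃ u l', cs.IsReflection u ∧ (∀ t ∈ l', cs.IsReflection t) ∧ l'.prod = 1 ∧
      HurwitzEquiv l (u :: u :: l') := by
  obtain ⟨A, t, D, h⟩ := cs.exists_hurwitzEquiv_append_cons_cons hne hrefl hprod
  have h' := h.trans (hurwitzEquiv_append_cons_cons A t D)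
  have hrefl' := h'.forall_mem (fun x u hu => hu.conj x) hrefl
  simp only [forall_mem_cons] at hrefl'
  refine ⟨_, A ++ D, hrefl'.1, hrefl'.2.2, ?_, h'⟩
  have := h'.prod_eq
  rwa [hprod, prod_cons, prod_cons, ← mul_assoc, hrefl'.1.mul_self, one_mul, eq_comm] at this

end CoxeterSystem

/-- **Hurwitz problem in Coxeter–Weyl groups.** Let `t₁ ⋅ t₂ ⋅ … ⋅ t_l` be a
factorisation of the identity of a Coxeter group `W` into quasireflections. Then `l` is
even and the factorisation is Hurwitz equivalent to a factorisation `t′₁ ⋅ … ⋅ t′_l` into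
squares of quasireflections, i.e. with `t′_{2i−1} = t′_{2i}` for every `i`. -/
theorem hurwitz_problem_coxeter
    {B : Type*} {W : Type*} [Group W] {M : CoxeterMatrix B} (cs : CoxeterSystem M W)
    (l : List W) (hrefl : ∀ t ∈ l, cs.IsReflection t) (hprod : l.prod = 1) :
    Even l.length ∧
      ∃ ts : List W, (∀ t ∈ ts, cs.IsReflection t) ∧
        HurwitzEquiv l (ts.flatMap fun t => [t, t]) := by
  induction hn : l.length using Nat.strong_induction_on generalizing l with
  | _ n ih =>
  rcases eq_or_ne l [] with rfl | hne
  · exact ⟨by simp [← hn], [], by simp, .refl _⟩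
  obtain ⟨u, l', hu, hrefl', hprod', h⟩ := cs.exists_hurwitzEquiv_cons_cons hne hrefl hprod
  have hlen : n = l'.length + 2 := by simpa [← hn] using h.length_eq
  obtain ⟨heven, ts, hts, h'⟩ := ih _ (by omega) l' hrefl' hprod' rfl
  refine ⟨hlen ▸ heven.add even_two, u :: ts, forall_mem_cons.2 ⟨hu, hts⟩, ?_⟩
  exact h.trans (h'.append_left [u, u])
end

section
/- Two generators s′, s″ ∈ S of a Coxeter group W(S) are conjugate in W(S) if and only if they can be connected by a chain s′ = s₀, s₁, …, s_n = s″ of generators such that each Coxeter exponent m(s_{i−1}, s_i) is odd. -/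
/-!
Conjugation by the rotation `(s s')ᵏ` of the dihedral group `⟨s, s'⟩` carries `s` to `s'` when
`m(s, s') = 2k + 1`, which gives one direction. Conversely, for every union `C` of classes of the
"odd chain" relation, the sign character sending `s ∈ C` to `-1` and the other generators to `1`
respects all Coxeter relations (the odd ones only join generators with equal signs), so it
extends to a homomorphism `W → ℤˣ`; being a character, it is constant on conjugacy classes.
-/

theorem isConj_of_mul_self_eq_one_of_mul_pow_odd {G : Type*} [Group G] {a b : G}
    (ha : a * a = 1) (hb : b * b = 1) {n : ℕ} (hn : Odd n) (hab : (a * b) ^ n = 1) :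
    IsConj a b := by
  obtain ⟨k, rfl⟩ := hn
  have ha' : a⁻¹ = a := inv_eq_of_mul_eq_one_right ha
  have hb' : b⁻¹ = b := inv_eq_of_mul_eq_one_right hb
  set w := a * b with hw
  have hconj_inv : a * w⁻¹ * a⁻¹ = w := by
    rw [hw, mul_inv_rev, ha', hb', mul_assoc, mul_assoc, ha, mul_one]
  have hconj_pow : a * (w ^ k)⁻¹ * a⁻¹ = w ^ k := by
    rw [← inv_pow, ← conj_pow, hconj_inv]
  have hpow_even : w ^ (2 * k) = w⁻¹ :=
    eq_inv_of_mul_eq_one_left (by rw [← pow_succ, hab])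
  refine isConj_iff.2 ⟨w ^ k, ?_⟩
  calc w ^ k * a * (w ^ k)⁻¹ = w ^ k * (a * (w ^ k)⁻¹ * a⁻¹) * a := by group
    _ = w ^ (2 * k) * a := by rw [hconj_pow, ← pow_add, two_mul]
    _ = b := by rw [hpow_even, hw, mul_inv_rev, ha', hb', mul_assoc, ha, mul_one]

theorem CoxeterMatrix.isLiftable_of_odd_imp_eq {B : Type*} (M : CoxeterMatrix B) {f : B → ℤˣ}
    (hf : ∀ i i', Odd (M i i') → f i = f i') : M.IsLiftable f := by
  intro i i'
  rcases Nat.even_or_odd (M i i') with ⟨m, hm⟩ | hodd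
  · rw [hm, ← two_mul, pow_mul, Int.units_sq, one_pow]
  · rw [hf i i' hodd, Int.units_mul_self, one_pow]

namespace CoxeterSystem

variable {B W : Type*} [Group W] {M : CoxeterMatrix B} (cs : CoxeterSystem M W)

theorem isConj_simple_of_odd {i i' : B} (h : Odd (M i i')) :
    IsConj (cs.simple i) (cs.simple i') :=
  isConj_of_mul_self_eq_one_of_mul_pow_odd (cs.simple_mul_simple_self i)
    (cs.simple_mul_simple_self i') h (cs.simple_mul_simple_pow i i')

theorem iff_of_isConj_simple (P : B → Prop) (hP : ∀ i i', Odd (M i i') → (P i ↔ P i'))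
    {i i' : B} (h : IsConj (cs.simple i) (cs.simple i')) : P i ↔ P i' := by
  classical
  let sign : B → ℤˣ := fun b => if P b then -1 else 1
  have hlift : M.IsLiftable sign :=
    M.isLiftable_of_odd_imp_eq fun a b hab => by simp only [sign, hP a b hab]
  have hsign : sign i = sign i' := by
    simpa only [isConj_iff_eq, lift_apply_simple] using (cs.lift ⟨sign, hlift⟩).map_isConj h
  by_cases hi : P i <;> by_cases hi' : P i' <;> simp_all [sign]

end CoxeterSystem

/-- Two generators `s′, s″ ∈ S` of a Coxeter group `W(S)` are conjugate
in `W(S)` if and only if they can be connected by a chain `s′ = s₀, s₁, …, s_n = s″` of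
generators such that each Coxeter exponent `m(s_{i−1}, s_i)` is odd. -/
theorem simple_isConj_iff_odd_chain
    {B : Type*} {W : Type*} [Group W] {M : CoxeterMatrix B} (cs : CoxeterSystem M W)
    (i i' : B) :
    IsConj (cs.simple i) (cs.simple i') ↔
      Relation.ReflTransGen (fun a b => Odd (M a b)) i i' := by
  constructor
  · intro h
    refine (cs.iff_of_isConj_simple (Relation.ReflTransGen (fun a b => Odd (M a b)) i) ?_ h).mp
      Relation.ReflTransGen.refl
    intro a b hab
    exact ⟨fun ha => ha.tail hab, fun hb => hb.tail (M.symmetric a b ▸ hab)⟩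
  · intro h
    induction h with
    | refl => exact IsConj.refl _
    | tail _ hodd ih => exact ih.trans (cs.isConj_simple_of_odd hodd)
end
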